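/- arXiv:2605.05877 — 2 statements merged into one kernel-verified Lean document; each statement's English description precedes it below -/
import Mathlib

section
/- Let Ω be a finite set, let π be a strictly positive probability vector on Ω, and let p be a transition rate kernel on Ω reversible with respect to π whose underlying graph is connected. Define the capacity c(x,y) = π(x)·p(x,y) for x ≠ y and c(x,x) = 0, the generator L f(x) = Σ_{y∈Ω} p(x,y)(f(y) − f(x)), the Dirichlet form E(f,g) = Σ_{x∈Ω} π(x)·f(x)·(−L g)(x), and W_{c,2} via the flux formulation. Then for every probability vector μ on Ω there exists ψ : Ω → ℝ such that (−L ψ)(x) = μ(x)/π(x) − 1 for all x ∈ Ω and W_{c,2}(μ, π)² = E(ψ, ψ). -/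
/-!
The optimal flux is the gradient flux `c (ψ x - ψ y)` of a solution of the Poisson equation
`Δ_c ψ = μ - π`, where `Δ_c f x = ∑ y, c x y (f x - f y) = π x (-L f x)`. This equation is
solvable because `Δ_c` is symmetric and, the graph being connected, its kernel consists of the
constants, so its range is the space of mean-zero functions. Any other admissible flux differs
from the gradient flux by a divergence-free `D`, and the energy splits as
`E(J₀ + D) = E(J₀) + ∑ (ψ x - ψ y) D x y + E(D)`; the cross term vanishes by discrete
integration by parts. Hence `W_{c,2}(μ, π)² = E(J₀) = ∑ ψ Δ_c ψ = E(ψ, ψ)`.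
-/

open Finset

/-- The underlying graph of a transition rate kernel `p`: an edge between `x ≠ y`
whenever `p x y > 0` or `p y x > 0`. -/
def kernelGraph {Ω : Type*} (p : Ω → Ω → ℝ) : SimpleGraph Ω where
  Adj x y := x ≠ y ∧ (0 < p x y ∨ 0 < p y x)
  symm := ⟨fun x y h => ⟨h.1.symm, h.2.symm⟩⟩
  loopless := ⟨fun x h => h.1 rfl⟩

/-- The discrete Wasserstein-2 distance associated with a fixed capacity `c`,
in the dual flux formulation. -/
noncomputable def Wc2 {Ω : Type*} [Fintype Ω] (c : Ω → Ω → ℝ) (μ ν : Ω → ℝ) : ℝ :=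
  Real.sqrt (sInf {v : ℝ | ∃ J : Ω → Ω → ℝ,
    (∀ x y, J x y = - J y x) ∧
    (∀ x y, c x y = 0 → J x y = 0) ∧
    (∀ x, (ν x - μ x) + ∑ y, J x y = 0) ∧
    v = (1 / 2) * ∑ x, ∑ y, if 0 < c x y then J x y ^ 2 / c x y else 0})

section

variable {Ω : Type*}

section Finite

variable [Fintype Ω]

theorem sum_mul_sum_eq_half_sum_sum_of_antisymm (f : Ω → ℝ) {D : Ω → Ω → ℝ}
    (hD : ∀ x y, D x y = -D y x) :
    ∑ x, f x * ∑ y, D x y = (1 / 2) * ∑ x, ∑ y, (f x - f y) * D x y := by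
  have hswap : ∑ x, ∑ y, f y * D x y = -∑ x, ∑ y, f x * D x y := by
    rw [sum_comm, ← sum_neg_distrib]
    refine sum_congr rfl fun x _ => ?_
    rw [← sum_neg_distrib]
    exact sum_congr rfl fun y _ => by rw [hD y x, mul_neg]
  simp only [sub_mul, sum_sub_distrib, hswap, mul_sum]
  ring

def weightedLaplacian (c : Ω → Ω → ℝ) : (Ω → ℝ) →ₗ[ℝ] Ω → ℝ where
  toFun f x := ∑ y, c x y * (f x - f y)
  map_add' f g := by
    ext x
    simp only [Pi.add_apply, ← sum_add_distrib]
    exact sum_congr rfl fun y _ => by ring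
  map_smul' a f := by
    ext x
    simp only [Pi.smul_apply, smul_eq_mul, RingHom.id_apply, mul_sum]
    exact sum_congr rfl fun y _ => by ring

@[simp]
theorem weightedLaplacian_apply (c : Ω → Ω → ℝ) (f : Ω → ℝ) (x : Ω) :
    weightedLaplacian c f x = ∑ y, c x y * (f x - f y) :=
  rfl

section SymmetricWeights

variable {c : Ω → Ω → ℝ}

theorem sum_mul_weightedLaplacian (hc : ∀ x y, c x y = c y x) (f g : Ω → ℝ) :
    ∑ x, g x * weightedLaplacian c f x
      = (1 / 2) * ∑ x, ∑ y, c x y * (g x - g y) * (f x - f y) := by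
  simp only [weightedLaplacian_apply]
  rw [sum_mul_sum_eq_half_sum_sum_of_antisymm g fun x y => by rw [hc]; ring]
  simp only [mul_left_comm, mul_assoc]

theorem sum_weightedLaplacian_mul (hc : ∀ x y, c x y = c y x) (f g : Ω → ℝ) :
    ∑ x, weightedLaplacian c f x * g x = ∑ x, f x * weightedLaplacian c g x := by
  simp only [mul_comm _ (g _), sum_mul_weightedLaplacian hc]
  simp only [mul_right_comm _ (g _ - _)]

theorem eq_of_weightedLaplacian_eq_zero (hc : ∀ x y, c x y = c y x) (hc₀ : ∀ x y, 0 ≤ c x y)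
    {f : Ω → ℝ} (hf : weightedLaplacian c f = 0) {x y : Ω} (hxy : 0 < c x y) : f x = f y := by
  have hterm : ∀ a b, 0 ≤ c a b * (f a - f b) * (f a - f b) := fun a b => by
    rw [mul_assoc]; exact mul_nonneg (hc₀ a b) (mul_self_nonneg _)
  have hsum : ∑ x, ∑ y, c x y * (f x - f y) * (f x - f y) = 0 := by
    have := sum_mul_weightedLaplacian hc f f
    simp only [hf, Pi.zero_apply, mul_zero, sum_const_zero] at this
    linarith
  rw [sum_eq_zero_iff_of_nonneg fun a _ => sum_nonneg fun b _ => hterm a b] at hsum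
  have := (sum_eq_zero_iff_of_nonneg fun y _ => hterm x y).1 (hsum x (mem_univ x)) y (mem_univ y)
  rw [mul_assoc, mul_eq_zero, mul_self_eq_zero, sub_eq_zero] at this
  exact this.resolve_left hxy.ne'

end SymmetricWeights

theorem SimpleGraph.Reachable.apply_eq_of_forall_adj {V α : Type*} {G : SimpleGraph V} {u v : V}
    (h : G.Reachable u v) {f : V → α} (hf : ∀ x y, G.Adj x y → f x = f y) : f u = f v := by
  obtain ⟨w⟩ := h
  induction w with
  | nil => rfl
  | cons hadj _ ih => exact (hf _ _ hadj).trans ih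

theorem exists_weightedLaplacian_eq {c : Ω → Ω → ℝ} (hc : ∀ x y, c x y = c y x)
    (hc₀ : ∀ x y, 0 ≤ c x y) {G : SimpleGraph Ω} (hG : G.Connected)
    (hGc : ∀ x y, G.Adj x y → 0 < c x y) {g : Ω → ℝ} (hg : ∑ x, g x = 0) :
    ∃ ψ, weightedLaplacian c ψ = g := by
  let e := (WithLp.linearEquiv 2 ℝ (Ω → ℝ)).symm
  let T := e.conj (weightedLaplacian c)
  have hinner (u v : EuclideanSpace ℝ Ω) : inner ℝ u v = ∑ x, u x * v x := by
    simp [EuclideanSpace.inner_eq_star_dotProduct, dotProduct, mul_comm]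
  have hT : T.IsSymmetric := fun u v => by
    simp only [hinner, T, LinearEquiv.conj_apply_apply]
    simpa [e] using sum_weightedLaplacian_mul hc u.ofLp v.ofLp
  have hker (v : EuclideanSpace ℝ Ω) (hv : v ∈ LinearMap.ker T) (x y : Ω) : v x = v y := by
    have hv' : weightedLaplacian c v = 0 := by
      rw [LinearMap.mem_ker] at hv
      simpa [T, e] using congrArg e.symm hv
    exact (hG.preconnected x y).apply_eq_of_forall_adj fun a b hab =>
      eq_of_weightedLaplacian_eq_zero hc hc₀ hv' (hGc a b hab)
  have hg' : e g ∈ (LinearMap.ker T)ᗮ := fun v hv => by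
    obtain ⟨x₀⟩ := hG.nonempty
    simp [hinner, e, hker v hv _ x₀, ← mul_sum, hg]
  rw [← hT.orthogonal_range, Submodule.orthogonal_orthogonal] at hg'
  obtain ⟨ψ, hψ⟩ := hg'
  exact ⟨e.symm ψ, by simpa [T] using congrArg e.symm hψ⟩

structure IsFlux (c : Ω → Ω → ℝ) (μ ν : Ω → ℝ) (J : Ω → Ω → ℝ) : Prop where
  antisymm : ∀ x y, J x y = -J y x
  eq_zero_of_capacity_eq_zero : ∀ x y, c x y = 0 → J x y = 0
  divergence_eq : ∀ x, (ν x - μ x) + ∑ y, J x y = 0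

noncomputable def fluxEnergy (c J : Ω → Ω → ℝ) : ℝ :=
  (1 / 2) * ∑ x, ∑ y, if 0 < c x y then J x y ^ 2 / c x y else 0

theorem fluxEnergy_nonneg (c J : Ω → Ω → ℝ) : 0 ≤ fluxEnergy c J := by
  unfold fluxEnergy
  refine mul_nonneg (by norm_num) (sum_nonneg fun x _ => sum_nonneg fun y _ => ?_)
  split_ifs with h
  exacts [div_nonneg (sq_nonneg _) h.le, le_rfl]

theorem Wc2_eq_sqrt_sInf (c : Ω → Ω → ℝ) (μ ν : Ω → ℝ) :
    Wc2 c μ ν = √(sInf (fluxEnergy c '' {J | IsFlux c μ ν J})) := by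
  unfold Wc2 fluxEnergy
  congr 2
  ext v
  constructor
  · rintro ⟨J, hanti, hzero, hdiv, rfl⟩
    exact ⟨J, ⟨hanti, hzero, hdiv⟩, rfl⟩
  · rintro ⟨J, ⟨hanti, hzero, hdiv⟩, rfl⟩
    exact ⟨J, hanti, hzero, hdiv, rfl⟩

theorem sq_Wc2_eq_fluxEnergy {c J₀ : Ω → Ω → ℝ} {μ ν : Ω → ℝ} (hJ₀ : IsFlux c μ ν J₀)
    (hmin : ∀ J, IsFlux c μ ν J → fluxEnergy c J₀ ≤ fluxEnergy c J) :
    Wc2 c μ ν ^ 2 = fluxEnergy c J₀ := by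
  have hleast : IsLeast (fluxEnergy c '' {J | IsFlux c μ ν J}) (fluxEnergy c J₀) :=
    ⟨Set.mem_image_of_mem _ hJ₀, Set.forall_mem_image.2 hmin⟩
  rw [Wc2_eq_sqrt_sInf, hleast.csInf_eq, Real.sq_sqrt (fluxEnergy_nonneg c J₀)]

def gradientFlux (c : Ω → Ω → ℝ) (ψ : Ω → ℝ) (x y : Ω) : ℝ :=
  c x y * (ψ x - ψ y)

section GradientFlux

variable {c : Ω → Ω → ℝ} {ψ μ ν : Ω → ℝ}

theorem isFlux_gradientFlux (hc : ∀ x y, c x y = c y x) (hψ : weightedLaplacian c ψ = μ - ν) :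
    IsFlux c μ ν (gradientFlux c ψ) where
  antisymm x y := by simp only [gradientFlux, hc x y]; ring
  eq_zero_of_capacity_eq_zero x y h := by simp [gradientFlux, h]
  divergence_eq x := by
    have := congrFun hψ x
    simp only [weightedLaplacian_apply, Pi.sub_apply] at this
    simp only [gradientFlux, this]
    ring

theorem fluxEnergy_gradientFlux (hc : ∀ x y, c x y = c y x) (hc₀ : ∀ x y, 0 ≤ c x y) :
    fluxEnergy c (gradientFlux c ψ) = ∑ x, ψ x * weightedLaplacian c ψ x := by
  rw [sum_mul_weightedLaplacian hc, fluxEnergy]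
  congr 1
  refine sum_congr rfl fun x _ => sum_congr rfl fun y _ => ?_
  rcases (hc₀ x y).lt_or_eq with h | h
  · rw [if_pos h, gradientFlux]
    field_simp
  · simp [← h]

theorem fluxEnergy_gradientFlux_le (hc : ∀ x y, c x y = c y x) (hc₀ : ∀ x y, 0 ≤ c x y)
    (hψ : weightedLaplacian c ψ = μ - ν) {J : Ω → Ω → ℝ} (hJ : IsFlux c μ ν J) :
    fluxEnergy c (gradientFlux c ψ) ≤ fluxEnergy c J := by
  set J₀ := gradientFlux c ψ
  have hJ₀ : IsFlux c μ ν J₀ := isFlux_gradientFlux hc hψ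
  -- `(J₀ + D)² / c = J₀² / c + 2 (ψ x - ψ y) D + D² / c` since `J₀ = c (ψ x - ψ y)`.
  have hpoint : ∀ x y, (if 0 < c x y then J₀ x y ^ 2 / c x y else 0)
      + 2 * ((ψ x - ψ y) * (J x y - J₀ x y)) ≤ if 0 < c x y then J x y ^ 2 / c x y else 0 := by
    intro x y
    rcases (hc₀ x y).lt_or_eq with h | h
    · simp only [if_pos h, J₀, gradientFlux]
      have hsq : J x y ^ 2 / c x y - (c x y * (ψ x - ψ y)) ^ 2 / c x y
          - 2 * ((ψ x - ψ y) * (J x y - c x y * (ψ x - ψ y)))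
          = (J x y - c x y * (ψ x - ψ y)) ^ 2 / c x y := by
        field_simp
        ring
      linarith [div_nonneg (sq_nonneg (J x y - c x y * (ψ x - ψ y))) h.le]
    · simp [← h, hJ.eq_zero_of_capacity_eq_zero x y h.symm,
        hJ₀.eq_zero_of_capacity_eq_zero x y h.symm]
  have hcross : ∑ x, ∑ y, (ψ x - ψ y) * (J x y - J₀ x y) = 0 := by
    have hdiv : ∀ x, ∑ y, (J x y - J₀ x y) = 0 := fun x => by
      rw [sum_sub_distrib]
      linarith [hJ.divergence_eq x, hJ₀.divergence_eq x]
    have := sum_mul_sum_eq_half_sum_sum_of_antisymm ψ (D := fun x y => J x y - J₀ x y)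
      fun x y => by rw [hJ.antisymm, hJ₀.antisymm x y]; ring
    simp only [hdiv, mul_zero, sum_const_zero] at this
    linarith
  have := sum_le_sum fun x (_ : x ∈ univ) => sum_le_sum fun y (_ : y ∈ univ) => hpoint x y
  simp only [sum_add_distrib, ← mul_sum, hcross, mul_zero, add_zero] at this
  unfold fluxEnergy
  linarith

end GradientFlux

end Finite

section Kernel

variable [DecidableEq Ω] {π : Ω → ℝ} {p : Ω → Ω → ℝ}

def kernelCapacity (π : Ω → ℝ) (p : Ω → Ω → ℝ) (x y : Ω) : ℝ :=
  if x = y then 0 else π x * p x y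

theorem kernelCapacity_symm (hrev : ∀ x y, π x * p x y = π y * p y x) (x y : Ω) :
    kernelCapacity π p x y = kernelCapacity π p y x := by
  unfold kernelCapacity
  by_cases h : x = y
  · subst h; rfl
  · rw [if_neg h, if_neg (Ne.symm h), hrev]

theorem kernelCapacity_nonneg (hπ : ∀ x, 0 ≤ π x) (hp : ∀ x y, x ≠ y → 0 ≤ p x y) (x y : Ω) :
    0 ≤ kernelCapacity π p x y := by
  unfold kernelCapacity
  split_ifs with h
  exacts [le_rfl, mul_nonneg (hπ x) (hp x y h)]

theorem kernelCapacity_pos_of_adj (hπ : ∀ x, 0 < π x) (hrev : ∀ x y, π x * p x y = π y * p y x)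
    {x y : Ω} (hxy : (kernelGraph p).Adj x y) : 0 < kernelCapacity π p x y := by
  obtain ⟨hne, hpos | hpos⟩ := hxy
  · rw [kernelCapacity, if_neg hne]
    exact mul_pos (hπ x) hpos
  · rw [kernelCapacity_symm hrev, kernelCapacity, if_neg hne.symm]
    exact mul_pos (hπ y) hpos

theorem mul_neg_sum_eq_weightedLaplacian_kernelCapacity [Fintype Ω] (f : Ω → ℝ) (x : Ω) :
    π x * -∑ y, p x y * (f y - f x) = weightedLaplacian (kernelCapacity π p) f x := by
  rw [weightedLaplacian_apply, ← sum_neg_distrib, mul_sum]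
  refine sum_congr rfl fun y _ => ?_
  rw [kernelCapacity]
  split_ifs with h
  · simp [h]
  · ring

end Kernel

end

theorem exists_optimal_potential_for_Wc2_general {Ω : Type*} [Fintype Ω] [DecidableEq Ω]
    (π : Ω → ℝ) (p : Ω → Ω → ℝ)
    (hπpos : ∀ x, 0 < π x) (hπsum : ∑ x, π x = 1)
    (hp : ∀ x y, x ≠ y → 0 ≤ p x y)
    (hrev : ∀ x y, π x * p x y = π y * p y x)
    (hconn : (kernelGraph p).Connected)
    (c : Ω → Ω → ℝ) (hc : ∀ x y, c x y = if x = y then 0 else π x * p x y)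
    (L : (Ω → ℝ) → Ω → ℝ) (hL : ∀ f x, L f x = ∑ y, p x y * (f y - f x))
    (dirE : (Ω → ℝ) → (Ω → ℝ) → ℝ)
    (hdirE : ∀ f g, dirE f g = ∑ x, π x * f x * (-(L g x))) :
    ∀ μ : Ω → ℝ, (∀ x, 0 ≤ μ x) → (∑ x, μ x = 1) →
      ∃ ψ : Ω → ℝ, (∀ x, -(L ψ x) = μ x / π x - 1) ∧
        Wc2 c μ π ^ 2 = dirE ψ ψ := by
  intro μ _ hμsum
  obtain rfl : c = kernelCapacity π p := funext fun x => funext (hc x)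
  have hsymm := kernelCapacity_symm hrev
  have hc₀ := kernelCapacity_nonneg (fun x => (hπpos x).le) hp
  have hLc (f : Ω → ℝ) (x : Ω) : π x * -L f x = weightedLaplacian (kernelCapacity π p) f x := by
    rw [hL, mul_neg_sum_eq_weightedLaplacian_kernelCapacity]
  obtain ⟨ψ, hψ⟩ := exists_weightedLaplacian_eq hsymm hc₀ hconn
    (fun _ _ => kernelCapacity_pos_of_adj hπpos hrev) (g := μ - π)
    (by simp [sum_sub_distrib, hμsum, hπsum])
  refine ⟨ψ, fun x => ?_, ?_⟩
  · have := hLc ψ x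
    rw [hψ, Pi.sub_apply] at this
    field_simp [(hπpos x).ne']
    linarith
  · rw [sq_Wc2_eq_fluxEnergy (isFlux_gradientFlux hsymm hψ)
      fun _ => fluxEnergy_gradientFlux_le hsymm hc₀ hψ, fluxEnergy_gradientFlux hsymm hc₀, hdirE]
    exact sum_congr rfl fun x _ => by rw [← hLc]; ring

/-- Existence of an optimal potential for `W_{c,2}(μ, π)`: there is `ψ` with
`(-L)ψ = dμ/dπ - 1` and `W_{c,2}(μ, π)² = E(ψ, ψ)`. -/
theorem exists_optimal_potential_for_Wc2 {Ω : Type*} [Fintype Ω] [DecidableEq Ω]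
    (π : Ω → ℝ) (p : Ω → Ω → ℝ)
    (hπpos : ∀ x, 0 < π x) (hπsum : ∑ x, π x = 1)
    (hp : ∀ x y, x ≠ y → 0 ≤ p x y) (hrow : ∀ x, ∑ y, p x y = 0)
    (hrev : ∀ x y, π x * p x y = π y * p y x)
    (hconn : (kernelGraph p).Connected)
    (c : Ω → Ω → ℝ) (hc : ∀ x y, c x y = if x = y then 0 else π x * p x y)
    (L : (Ω → ℝ) → Ω → ℝ) (hL : ∀ f x, L f x = ∑ y, p x y * (f y - f x))
    (dirE : (Ω → ℝ) → (Ω → ℝ) → ℝ)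
    (hdirE : ∀ f g, dirE f g = ∑ x, π x * f x * (-(L g x))) :
    ∀ μ : Ω → ℝ, (∀ x, 0 ≤ μ x) → (∑ x, μ x = 1) →
      ∃ ψ : Ω → ℝ, (∀ x, -(L ψ x) = μ x / π x - 1) ∧
        Wc2 c μ π ^ 2 = dirE ψ ψ :=
  exists_optimal_potential_for_Wc2_general π p hπpos hπsum hp hrev hconn c hc L hL dirE hdirE
end

section
/- Let n ≥ 1 be an integer and β ≥ 1 a real number. Let Ω̄ = {−n, −n+2, …, n−2, n} and for m ∈ Ω̄ define w(m) = C(n, (n+m)/2) · exp(β·m²/(2n)). Then there exists m* ∈ Ω̄ with 0 ≤ m* ≤ n such that (i) w(m) ≤ w(m+2) for all m ∈ Ω̄ with 0 ≤ m and m+2 ≤ m*, (ii) w(m+2) ≤ w(m) for all m ∈ Ω̄ with m* ≤ m ≤ n−2, (iii) w(m*) = max{w(m) : m ∈ Ω̄, m ≥ 0}, and (iv) m* > n·√(1 − 1/β). -/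
/-!
With `t = (m + 1) / (n + 1)` one has `(n + m + 2) / (n - m) = exp (2 artanh t)`, so
`w (m + 2) / w m = exp (2 t (β (n + 1) / n - artanh t / t))`. Since
`artanh t / t = ∑ t ^ (2k) / (2k + 1)` is strictly increasing on `(0, 1)`, once the weights
stop increasing they never increase again, which gives unimodality. The bound
`artanh t ≤ t / (1 - t ^ 2)` (compare the series with a geometric one) shows that the
weights still increase at every `m ≤ n √(1 - 1/β)`, so the mode lies beyond that point.
-/

namespace Real

theorem hasSum_artanh {x : ℝ} (hx : |x| < 1) :
    HasSum (fun k : ℕ => x ^ (2 * k + 1) / (2 * k + 1)) (artanh x) := by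
  obtain ⟨hx₀, hx₁⟩ := abs_lt.1 hx
  rw [artanh_eq_half_log ⟨hx₀.le, hx₁.le⟩, log_div (by linarith) (by linarith)]
  exact ((hasSum_log_sub_log_of_abs_lt_one hx).mul_left (1 / 2)).congr_fun fun k => by ring

theorem artanh_le_div_one_sub_sq {x : ℝ} (hx₀ : 0 ≤ x) (hx₁ : x < 1) :
    artanh x ≤ x / (1 - x ^ 2) := by
  have hx2 : x ^ 2 < 1 := by nlinarith
  have hgeom := (hasSum_geometric_of_lt_one (sq_nonneg x) hx2).mul_left x
  rw [div_eq_mul_inv]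
  refine hasSum_le (fun k => ?_) (hasSum_artanh (abs_lt.2 ⟨by linarith, hx₁⟩)) hgeom
  rw [← pow_mul, ← pow_succ']
  exact div_le_self (by positivity) (by norm_cast; omega)

theorem strictMonoOn_artanh_div : StrictMonoOn (fun x => artanh x / x) (Set.Ioo 0 1) := by
  have hasSum_div {x : ℝ} (hx : x ∈ Set.Ioo 0 1) :
      HasSum (fun k : ℕ => (x ^ 2) ^ k / (2 * k + 1)) (artanh x / x) := by
    refine ((hasSum_artanh (abs_lt.2 ⟨by linarith [hx.1], hx.2⟩)).div_const x).congr_fun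
      fun k => ?_
    rw [← pow_mul, pow_succ]
    field_simp [hx.1.ne']
  intro x hx y hy hxy
  have hsq : x ^ 2 < y ^ 2 := pow_lt_pow_left₀ hxy hx.1.le two_ne_zero
  refine hasSum_lt (i := 1) (fun k => ?_) ?_ (hasSum_div hx) (hasSum_div hy)
  · gcongr
  · simp only [pow_one]
    gcongr

theorem exp_two_mul_artanh {x : ℝ} (hx : x ∈ Set.Ioo (-1) 1) :
    exp (2 * artanh x) = (1 + x) / (1 - x) := by
  rw [mul_comm, exp_mul, exp_artanh hx, rpow_two, sq_sqrt (div_pos (by grind) (by grind)).le]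

end Real

theorem exists_monotoneOn_Iic_antitoneOn_Icc {α : Type*} [LinearOrder α] {f : ℕ → α} {N : ℕ}
    (h : ∀ i j, i < j → j < N → f j ≤ f (j + 1) → f i < f (i + 1)) :
    ∃ K ≤ N, (K < N → f (K + 1) ≤ f K) ∧
      MonotoneOn f (Set.Iic K) ∧ AntitoneOn f (Set.Icc K N) := by
  classical
  have hex : ∃ K, K = N ∨ f (K + 1) ≤ f K := ⟨N, Or.inl rfl⟩
  set K := Nat.find hex
  refine ⟨K, Nat.find_min' hex (Or.inl rfl),
    fun hKN => (Nat.find_spec hex).resolve_left hKN.ne, ?_, ?_⟩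
  · refine monotoneOn_of_le_add_one Set.ordConnected_Iic fun k _ _ hk => ?_
    have hkK : ¬(k = N ∨ f (k + 1) ≤ f k) := Nat.find_min hex (Nat.lt_of_succ_le hk)
    exact (not_le.1 (not_or.1 hkK).2).le
  · refine antitoneOn_of_add_one_le Set.ordConnected_Icc fun k _ hk hk1 => ?_
    obtain hKN | hK := Nat.find_spec hex
    · exact absurd (hKN ▸ hk.1) (Nat.not_le_of_lt hk1.2)
    obtain hkK | hKk := hk.1.eq_or_lt
    · exact hkK ▸ hK
    · by_contra! hdesc
      exact (h K k hKk hk1.2 hdesc.le).not_ge hK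

open Real

theorem sqrt_one_sub_one_div_lt_one {β : ℝ} (hβ : 0 < β) : √(1 - 1 / β) < 1 := by
  rw [sqrt_lt' one_pos]
  linarith [one_div_pos.2 hβ]

theorem mul_sqrt_one_sub_one_div_lt {N β : ℝ} (hN : 0 < N) (hβ : 0 < β) :
    N * √(1 - 1 / β) < N :=
  mul_lt_of_lt_one_right hN (sqrt_one_sub_one_div_lt_one hβ)

theorem artanh_lt_of_le_mul_sqrt {x N β : ℝ} (hN : 0 < N) (hβ : 1 ≤ β) (hx₀ : 0 ≤ x)
    (hx : x ≤ N * √(1 - 1 / β)) :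
    artanh ((x + 1) / (N + 1)) < β * (N + 1) / N * ((x + 1) / (N + 1)) := by
  set s := √(1 - 1 / β)
  have hs₀ : 0 ≤ s := sqrt_nonneg _
  have hs₁ : s < 1 := sqrt_one_sub_one_div_lt_one (by linarith)
  have hs2 : β * (1 - s ^ 2) = 1 := by
    rw [sq_sqrt (by rw [sub_nonneg, div_le_one (by linarith)]; exact hβ)]
    field_simp
    ring
  set t := (x + 1) / (N + 1)
  have ht₀ : 0 < t := by positivity
  have ht₁ : t < 1 := (div_lt_one (by linarith)).2 (by nlinarith)
  have hgap : N * (N + 1) < β * ((N + 1) ^ 2 - (x + 1) ^ 2) := by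
    have hx1 : (x + 1) ^ 2 ≤ (N * s + 1) ^ 2 := pow_le_pow_left₀ (by linarith) (by linarith) 2
    have hpos : 0 < N * (1 - s) ^ 2 := mul_pos hN (pow_pos (sub_pos.2 hs₁) 2)
    calc N * (N + 1) = β * ((1 - s ^ 2) * (N * (N + 1))) := by rw [← mul_assoc, hs2, one_mul]
      _ < β * ((N + 1) ^ 2 - (x + 1) ^ 2) := by gcongr; nlinarith
  have hfactor : 1 < β * (N + 1) / N * (1 - t ^ 2) := by
    rw [show β * (N + 1) / N * (1 - t ^ 2) = β * ((N + 1) ^ 2 - (x + 1) ^ 2) / (N * (N + 1)) by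
      simp only [t]; field_simp]
    exact (one_lt_div (by positivity)).2 hgap
  calc artanh t ≤ t / (1 - t ^ 2) := artanh_le_div_one_sub_sq ht₀.le ht₁
    _ < β * (N + 1) / N * t := by
      rw [div_lt_iff₀ (by nlinarith)]
      nlinarith

namespace MeanFieldIsing

noncomputable def magnetizationWeight (n : ℕ) (β : ℝ) (m : ℤ) : ℝ :=
  (n.choose (((n : ℤ) + m) / 2).toNat : ℝ) * exp (β * (m : ℝ) ^ 2 / (2 * n))

variable {n : ℕ} {β : ℝ} {m : ℤ}

theorem magnetizationWeight_pos (hm : m ≤ n) : 0 < magnetizationWeight n β m :=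
  mul_pos (Nat.cast_pos.2 (Nat.choose_pos (by omega))) (exp_pos _)

theorem magnetizationWeight_add_two_mul (hpar : m % 2 = n % 2) (hlo : -n ≤ m)
    (hhi : m + 2 ≤ n) :
    magnetizationWeight n β (m + 2) * (n + m + 2) =
      magnetizationWeight n β m * (n - m) * exp (2 * β * (m + 1) / n) := by
  obtain ⟨k, hk⟩ : ∃ k : ℕ, (n : ℤ) + m = 2 * k := ⟨((n + m) / 2).toNat, by omega⟩
  have hn : (n : ℝ) ≠ 0 := by norm_cast; omega
  have hmR : (m : ℝ) = 2 * k - n := by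
    rw [eq_sub_iff_add_eq, add_comm]; exact_mod_cast hk
  have hchoose : (n.choose (k + 1) : ℝ) * (k + 1) = n.choose k * (n - k) := by
    rw [← Nat.cast_sub (by omega)]
    exact_mod_cast Nat.choose_succ_right_eq n k
  unfold magnetizationWeight
  rw [show ((n : ℤ) + (m + 2)) / 2 = k + 1 by omega, show ((n : ℤ) + m) / 2 = k by omega]
  have hexp : exp (β * ((m + 2 : ℤ) : ℝ) ^ 2 / (2 * n)) =
      exp (β * (m : ℝ) ^ 2 / (2 * n)) * exp (2 * β * (m + 1) / n) := by
    rw [← exp_add]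
    congr 1
    field_simp
    push_cast
    ring
  rw [hexp, ← Int.natCast_add_one, Int.toNat_natCast, Int.toNat_natCast]
  linear_combination exp (β * (m : ℝ) ^ 2 / (2 * n)) * exp (2 * β * (m + 1) / n) *
    (2 * hchoose + (n.choose (k + 1) + n.choose k : ℝ) * hmR)

theorem magnetizationWeight_add_two (hpar : m % 2 = n % 2) (hlo : -n ≤ m) (hhi : m + 2 ≤ n) :
    magnetizationWeight n β (m + 2) = magnetizationWeight n β m *
      exp (2 * (β * (n + 1) / n * ((m + 1) / (n + 1)) - artanh ((m + 1) / (n + 1)))) := by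
  have hloR : -(n : ℝ) ≤ m := by exact_mod_cast hlo
  have hhiR : (m : ℝ) + 2 ≤ n := by exact_mod_cast hhi
  have hn : (0 : ℝ) < n := by linarith
  have hratio : (1 + ((m : ℝ) + 1) / (n + 1)) / (1 - ((m : ℝ) + 1) / (n + 1)) =
      (n + m + 2) / (n - m) := by
    field_simp
    ring
  have ht : ((m : ℝ) + 1) / (n + 1) ∈ Set.Ioo (-1 : ℝ) 1 := by
    constructor
    · rw [lt_div_iff₀ (by linarith)]; linarith
    · rw [div_lt_one (by linarith)]; linarith
  have hcoef : 2 * (β * (n + 1) / n * ((m + 1) / (n + 1))) = 2 * β * (m + 1) / n := by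
    field_simp
  rw [mul_sub, exp_sub, exp_two_mul_artanh ht, hratio, hcoef, eq_comm, ← mul_div_assoc,
    div_div_eq_mul_div, div_eq_iff (by linarith)]
  linear_combination (magnetizationWeight_add_two_mul hpar hlo hhi).symm

theorem magnetizationWeight_lt_add_two_iff (hpar : m % 2 = n % 2) (hlo : -n ≤ m)
    (hhi : m + 2 ≤ n) :
    magnetizationWeight n β m < magnetizationWeight n β (m + 2) ↔
      artanh ((m + 1) / (n + 1)) < β * (n + 1) / n * ((m + 1) / (n + 1)) := by
  rw [magnetizationWeight_add_two hpar hlo hhi,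
    lt_mul_iff_one_lt_right (magnetizationWeight_pos (by omega)), one_lt_exp_iff,
    mul_pos_iff_of_pos_left two_pos, sub_pos]

theorem magnetizationWeight_le_add_two_iff (hpar : m % 2 = n % 2) (hlo : -n ≤ m)
    (hhi : m + 2 ≤ n) :
    magnetizationWeight n β m ≤ magnetizationWeight n β (m + 2) ↔
      artanh ((m + 1) / (n + 1)) ≤ β * (n + 1) / n * ((m + 1) / (n + 1)) := by
  rw [magnetizationWeight_add_two hpar hlo hhi,
    le_mul_iff_one_le_right (magnetizationWeight_pos (by omega)), one_le_exp_iff,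
    mul_nonneg_iff_of_pos_left two_pos, sub_nonneg]

theorem magnetizationWeight_lt_add_two_of_le_add_two {m' : ℤ} (hpar : m % 2 = n % 2)
    (hpar' : m' % 2 = n % 2) (h0 : 0 ≤ m) (hmm' : m < m') (hm' : m' + 2 ≤ n)
    (hle : magnetizationWeight n β m' ≤ magnetizationWeight n β (m' + 2)) :
    magnetizationWeight n β m < magnetizationWeight n β (m + 2) := by
  rw [magnetizationWeight_le_add_two_iff hpar' (by omega) hm'] at hle
  rw [magnetizationWeight_lt_add_two_iff hpar (by omega) (by omega)]
  have h0R : (0 : ℝ) ≤ m := by exact_mod_cast h0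
  have hmm'R : (m : ℝ) < m' := by exact_mod_cast hmm'
  have hm'R : (m' : ℝ) + 2 ≤ n := by exact_mod_cast hm'
  have hn : (0 : ℝ) < n + 1 := by linarith
  have ht : ((m : ℝ) + 1) / (n + 1) ∈ Set.Ioo 0 1 :=
    ⟨by positivity, (div_lt_one hn).2 (by linarith)⟩
  have ht' : ((m' : ℝ) + 1) / (n + 1) ∈ Set.Ioo 0 1 :=
    ⟨div_pos (by linarith) hn, (div_lt_one hn).2 (by linarith)⟩
  have hlt := strictMonoOn_artanh_div ht ht' (by gcongr)
  rw [← div_le_iff₀ ht'.1] at hle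
  rw [← div_lt_iff₀ ht.1]
  exact hlt.trans_le hle

theorem magnetizationWeight_lt_add_two_of_le_mul_sqrt (hpar : m % 2 = n % 2) (h0 : 0 ≤ m)
    (hm : m + 2 ≤ n) (hβ : 1 ≤ β) (hle : (m : ℝ) ≤ n * √(1 - 1 / β)) :
    magnetizationWeight n β m < magnetizationWeight n β (m + 2) := by
  rw [magnetizationWeight_lt_add_two_iff hpar (by omega) hm]
  exact artanh_lt_of_le_mul_sqrt (by norm_cast; omega) hβ (by exact_mod_cast h0) hle

-- `k ↦ n % 2 + 2 * k` enumerates the nonnegative magnetizations of the parity of `n`.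
noncomputable def nonnegMagnetizationWeight (n : ℕ) (β : ℝ) (k : ℕ) : ℝ :=
  magnetizationWeight n β (n % 2 + 2 * k)

theorem nonnegMagnetizationWeight_succ (k : ℕ) :
    nonnegMagnetizationWeight n β (k + 1) = magnetizationWeight n β (n % 2 + 2 * k + 2) := by
  rw [nonnegMagnetizationWeight]
  push_cast
  ring_nf

theorem exists_mode (hn : 1 ≤ n) (hβ : 1 ≤ β) :
    ∃ K ≤ n / 2, MonotoneOn (nonnegMagnetizationWeight n β) (Set.Iic K) ∧
      AntitoneOn (nonnegMagnetizationWeight n β) (Set.Icc K (n / 2)) ∧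
      (n : ℝ) * √(1 - 1 / β) < ((n % 2 + 2 * K : ℤ) : ℝ) := by
  obtain ⟨K, hKN, hKdesc, hmono, hanti⟩ :=
    exists_monotoneOn_Iic_antitoneOn_Icc (f := nonnegMagnetizationWeight n β) (N := n / 2)
      fun i j hij hj hle => by
        rw [nonnegMagnetizationWeight_succ] at hle ⊢
        exact magnetizationWeight_lt_add_two_of_le_add_two (by omega) (by omega) (by omega)
          (by omega) (by omega) hle
  refine ⟨K, hKN, hmono, hanti, ?_⟩
  rcases hKN.lt_or_eq with hlt | rfl
  · by_contra! hle
    have hdesc := hKdesc hlt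
    rw [nonnegMagnetizationWeight_succ] at hdesc
    exact (magnetizationWeight_lt_add_two_of_le_mul_sqrt (by omega) (by omega) (by omega) hβ
      hle).not_ge hdesc
  · have hn_eq : ((n % 2 + 2 * (n / 2 : ℕ) : ℤ) : ℝ) = n := by exact_mod_cast (by omega)
    rw [hn_eq]
    exact mul_sqrt_one_sub_one_div_lt (by exact_mod_cast hn) (by linarith)

end MeanFieldIsing

open MeanFieldIsing

/-- In the low-temperature regime `β ≥ 1`, the magnetization pushforward of the
mean-field Ising model restricted to nonnegative magnetizations is unimodal with
mode strictly above `n·√(1 − 1/β)`. -/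
theorem meanFieldIsing_projected_unimodal_lowTemp (n : ℕ) (hn : 1 ≤ n)
    (β : ℝ) (hβ : 1 ≤ β)
    (w : ℤ → ℝ)
    (hw : ∀ m : ℤ, w m = (n.choose (((n : ℤ) + m) / 2).toNat : ℝ) *
      Real.exp (β * (m : ℝ) ^ 2 / (2 * n))) :
    ∃ mstar : ℤ, 0 ≤ mstar ∧ mstar ≤ (n : ℤ) ∧ mstar % 2 = (n : ℤ) % 2 ∧
      (∀ m : ℤ, m % 2 = (n : ℤ) % 2 → 0 ≤ m → m + 2 ≤ mstar → w m ≤ w (m + 2)) ∧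
      (∀ m : ℤ, m % 2 = (n : ℤ) % 2 → mstar ≤ m → m ≤ (n : ℤ) - 2 → w (m + 2) ≤ w m) ∧
      (∀ m : ℤ, m % 2 = (n : ℤ) % 2 → 0 ≤ m → m ≤ (n : ℤ) → w m ≤ w mstar) ∧
      (n : ℝ) * Real.sqrt (1 - 1 / β) < (mstar : ℝ) := by
  obtain rfl : w = magnetizationWeight n β := funext hw
  obtain ⟨K, hKN, hmono, hanti, hmode⟩ := exists_mode hn hβ
  have hparam (m : ℤ) (hm : m % 2 = n % 2) (h0 : 0 ≤ m) : ∃ k : ℕ, m = n % 2 + 2 * k :=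
    ⟨(m / 2).toNat, by omega⟩
  refine ⟨n % 2 + 2 * K, by omega, by omega, by omega, ?_, ?_, ?_, hmode⟩
  · rintro m hm h0 hle
    obtain ⟨k, rfl⟩ := hparam m hm h0
    rw [← nonnegMagnetizationWeight_succ]
    exact hmono (show k ≤ K by omega) (show k + 1 ≤ K by omega) k.le_succ
  · rintro m hm hle hhi
    obtain ⟨k, rfl⟩ := hparam m hm (by omega)
    rw [← nonnegMagnetizationWeight_succ]
    exact hanti ⟨by omega, by omega⟩ ⟨by omega, by omega⟩ k.le_succ
  · rintro m hm h0 hhi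
    obtain ⟨k, rfl⟩ := hparam m hm h0
    exact isMaxOn_Iic_of_mono_anti hmono hanti (show k ≤ n / 2 by omega)
end
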